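/- For every integer n ≥ 1, ∑_{j=1}^{n} H_{j,1}^2/((j+1)(j+2)) = H_{n,2} + 1 − 2H_{n,1}/(n+1) − 1/(n+1) − H_{n,1}^2/(n+2). Consequently, ∑_{j=1}^{n} H_{j,1}^2/((j+1)(j+2)) → π²/6 + 1 as n → ∞. -/

import Mathlib

open Finset Filter Real Topology

/-- Generalized harmonic number `H (n, m) = ∑_{i=1}^{n} 1/i^m` as a real number. -/
noncomputable def H (n m : ℕ) : ℝ := ∑ i ∈ Finset.Icc 1 n, (1 : ℝ) / (i : ℝ) ^ m

/-- Apéry's constant `ζ(3) = ∑_{k=1}^{∞} 1/k³`. -/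
noncomputable def zeta3 : ℝ := ∑' k : ℕ, 1 / ((k : ℝ) + 1) ^ 3

lemma H_succ (n m : ℕ) : H (n + 1) m = H n m + 1 / ((n : ℝ) + 1) ^ m := by
  unfold H
  rw [Finset.sum_Icc_succ_top (by omega)]
  push_cast; ring

lemma H_nonneg (n m : ℕ) : 0 ≤ H n m :=
  Finset.sum_nonneg fun i _ => by positivity

lemma H_eq_harmonic (n : ℕ) : H n 1 = (harmonic n : ℝ) := by
  induction n with
  | zero => simp [H]
  | succ k ih => rw [H_succ, ih, harmonic_succ]; push_cast; ring

lemma H_le (n : ℕ) : H n 1 ≤ 1 + Real.log n := by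
  rw [H_eq_harmonic]; exact_mod_cast harmonic_le_one_add_log n

lemma identity : ∀ n : ℕ, 1 ≤ n →
      ∑ j ∈ Finset.Icc 1 n, (H j 1) ^ 2 / (((j : ℝ) + 1) * ((j : ℝ) + 2)) =
        H n 2 + 1 - 2 * H n 1 / ((n : ℝ) + 1) - 1 / ((n : ℝ) + 1)
          - (H n 1) ^ 2 / ((n : ℝ) + 2) := by
  intro n hn
  induction n with
  | zero => omega
  | succ k ih =>
    rcases Nat.eq_or_lt_of_le hn with h | h
    · obtain rfl : k = 0 := by omega
      norm_num [H, show Finset.Icc 1 1 = {1} from rfl]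
    · have hk : 1 ≤ k := by omega
      rw [Finset.sum_Icc_succ_top (by omega), ih hk, H_succ, H_succ]
      have h1 : (k : ℝ) + 1 ≠ 0 := by positivity
      have h2 : (k : ℝ) + 2 ≠ 0 := by positivity
      have h3 : (k : ℝ) + 1 + 1 ≠ 0 := by positivity
      have h4 : (k : ℝ) + 1 + 2 ≠ 0 := by positivity
      push_cast
      field_simp
      ring

theorem sum_H1_sq_div_shift1_shift2 :
    (∀ n : ℕ, 1 ≤ n →
      ∑ j ∈ Finset.Icc 1 n, (H j 1) ^ 2 / (((j : ℝ) + 1) * ((j : ℝ) + 2)) =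
        H n 2 + 1 - 2 * H n 1 / ((n : ℝ) + 1) - 1 / ((n : ℝ) + 1)
          - (H n 1) ^ 2 / ((n : ℝ) + 2)) ∧
    Tendsto (fun n : ℕ =>
        ∑ j ∈ Finset.Icc 1 n, (H j 1) ^ 2 / (((j : ℝ) + 1) * ((j : ℝ) + 2)))
      atTop (nhds (π ^ 2 / 6 + 1)) := by
  refine ⟨identity, ?_⟩
  have hH2 : Tendsto (fun n : ℕ => H n 2) atTop (nhds (π ^ 2 / 6)) := by
    have h := hasSum_zeta_two.tendsto_sum_nat
    have : Tendsto (fun n : ℕ => ∑ i ∈ Finset.range (n + 1), (1 : ℝ) / (i : ℝ) ^ 2)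
        atTop (nhds (π ^ 2 / 6)) := h.comp (tendsto_add_atTop_nat 1)
    refine this.congr fun n => ?_
    induction n with
    | zero => simp [H]
    | succ k ih => rw [Finset.sum_range_succ, ih, H_succ]; push_cast; ring
  have hlog : Tendsto (fun n : ℕ => 2 * H n 1 / ((n : ℝ) + 1) + 1 / ((n : ℝ) + 1)
      + (H n 1) ^ 2 / ((n : ℝ) + 2)) atTop (nhds 0) := by
    have l1 : Tendsto (fun x : ℝ => Real.log x ^ 1 / (1 * x + 1)) atTop (nhds 0) :=
      Real.tendsto_pow_log_div_mul_add_atTop 1 1 1 one_ne_zero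
    have l2 : Tendsto (fun x : ℝ => Real.log x ^ 1 / (1 * x + 2)) atTop (nhds 0) :=
      Real.tendsto_pow_log_div_mul_add_atTop 1 2 1 one_ne_zero
    have l3 : Tendsto (fun x : ℝ => Real.log x ^ 2 / (1 * x + 2)) atTop (nhds 0) :=
      Real.tendsto_pow_log_div_mul_add_atTop 1 2 2 one_ne_zero
    have inv1 : Tendsto (fun x : ℝ => 1 / (x + 1)) atTop (nhds 0) := by
      simpa [Pi.inv_def] using (tendsto_atTop_add_const_right atTop (1:ℝ) tendsto_id).inv_tendsto_atTop
    have inv2 : Tendsto (fun x : ℝ => 1 / (x + 2)) atTop (nhds 0) := by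
      simpa [Pi.inv_def] using (tendsto_atTop_add_const_right atTop (2:ℝ) tendsto_id).inv_tendsto_atTop
    -- upper bound function tends to 0
    have hub : Tendsto (fun x : ℝ => 2 * (1 + Real.log x) / (x + 1) + 1 / (x + 1)
        + (1 + Real.log x) ^ 2 / (x + 2)) atTop (nhds 0) := by
      have key : Tendsto (fun x : ℝ => (2 / (x + 1) + 2 * (Real.log x ^ 1 / (1 * x + 1)))
          + 1 / (x + 1) + (1 / (x + 2) + 2 * (Real.log x ^ 1 / (1 * x + 2))
            + Real.log x ^ 2 / (1 * x + 2))) atTop (nhds 0) := by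
        have := (((inv1.const_mul 2).add (l1.const_mul 2)).add inv1).add
          ((inv2.add (l2.const_mul 2)).add l3)
        simpa [div_eq_mul_inv] using this
      refine key.congr' ?_
      filter_upwards [eventually_gt_atTop (0:ℝ)] with x hx
      have hx1 : x + 1 ≠ 0 := by positivity
      have hx2 : x + 2 ≠ 0 := by positivity
      field_simp
      ring
    have hcomp := hub.comp tendsto_natCast_atTop_atTop (α := ℕ)
    refine squeeze_zero' ?_ ?_ hcomp
    · filter_upwards with n
      have := H_nonneg n 1
      positivity
    · filter_upwards [eventually_ge_atTop 1] with n hn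
      simp only [Function.comp_apply]
      have hub1 : H n 1 ≤ 1 + Real.log n := H_le n
      have h0 : (0:ℝ) ≤ H n 1 := H_nonneg n 1
      have hp1 : (0:ℝ) < (n:ℝ) + 1 := by positivity
      have hp2 : (0:ℝ) < (n:ℝ) + 2 := by positivity
      have hL : (0:ℝ) ≤ 1 + Real.log n := le_trans h0 hub1
      gcongr
  have := (hH2.add (tendsto_const_nhds (x := (1:ℝ)))).sub hlog
  rw [show π ^ 2 / 6 + 1 - 0 = π ^ 2 / 6 + 1 by ring] at this
  refine this.congr' ?_
  filter_upwards [eventually_ge_atTop 1] with n hn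
  rw [identity n hn]
  ring
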